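/- arXiv:1108.1413 — 6 statements merged into one kernel-verified Lean document; each statement's English description precedes it below -/
import Mathlib

section
/- With Q a Weyl-invariant quadratic form on Y, n a positive integer, n_i the smallest positive integer with n_i·Q(α_i^∨) ∈ nℤ, and B the bilinear form of Q: for each i, the element n_i·α_i^∨ lies in the sublattice Ỹ = {y ∈ Y : B(y, y') ∈ nℤ for all y' ∈ Y}. -/
/-- With `Q` a Weyl-invariant quadratic form on `Y`, `n` a positive integer, and `nᵢ` the
smallest positive integer with `nᵢ • Q(αᵢ∨) ∈ nℤ`, the element `nᵢ • αᵢ∨` lies in the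
sublattice `Ỹ = {y ∈ Y : B(y, y') ∈ nℤ for all y' ∈ Y}`. -/
theorem modified_coroot_mem_metaplectic_lattice
    {Y X : Type*} [AddCommGroup Y] [AddCommGroup X]
    [Module.Free ℤ Y] [Module.Finite ℤ Y]
    (pair : Y →+ X →+ ℤ)
    (Q : Y → ℤ) (B : Y → Y → ℤ)
    (hBdef : ∀ y₁ y₂ : Y, B y₁ y₂ = Q (y₁ + y₂) - Q y₁ - Q y₂)
    (hQsmul : ∀ (m : ℤ) (y : Y), Q (m • y) = m ^ 2 * Q y)
    (hBadd : ∀ y₁ y₂ y₃ : Y, B (y₁ + y₂) y₃ = B y₁ y₃ + B y₂ y₃)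
    (αv : Y) (α : X) (hpair : pair αv α = 2)
    (hWeyl : ∀ y : Y, Q (y - pair y α • αv) = Q y)
    (n : ℕ) (hn : 0 < n)
    (ni : ℕ) (hni : IsLeast {m : ℕ | 0 < m ∧ (n : ℤ) ∣ (m : ℤ) * Q αv} ni) :
    ∀ y' : Y, (n : ℤ) ∣ B (ni • αv) y' := by
  intro y'
  -- Q 0 = 0
  have hQ0 : Q 0 = 0 := by
    have := hQsmul 0 0
    simpa using this
  -- symmetry of B
  have hBsymm : ∀ y₁ y₂, B y₁ y₂ = B y₂ y₁ := by
    intro y₁ y₂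
    rw [hBdef, hBdef, add_comm]
    ring
  -- B as an additive hom in the first variable, to get ℤ-linearity
  have hBzsmul : ∀ (m : ℤ) (x y : Y), B (m • x) y = m * B x y := by
    intro m x y
    let f : Y →+ ℤ :=
      { toFun := fun z => B z y
        map_zero' := by
          have : B 0 y = Q (0 + y) - Q 0 - Q y := hBdef 0 y
          simpa [hQ0] using this
        map_add' := fun a b => hBadd a b y }
    have := map_zsmul f m x
    simpa [f, smul_eq_mul] using this
  -- the key identity: for all y, (pair y α) * B αv y = (pair y α)^2 * Q αv
  have key : ∀ y : Y, (pair y α) * B αv y = (pair y α) ^ 2 * Q αv := by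
    intro y
    have h1 := hWeyl y
    have h2 : Q (y - pair y α • αv) =
        Q y + Q ((-(pair y α)) • αv) + B ((-(pair y α)) • αv) y := by
      rw [hBdef]
      have : y - pair y α • αv = (-(pair y α)) • αv + y := by
        rw [neg_smul]; abel
      rw [this]
      ring
    rw [h2, hQsmul, hBzsmul] at h1
    nlinarith [h1]
  -- deduce B αv y' = (pair y' α) * Q αv
  set c := pair y' α with hc
  have hBself : B αv αv = 2 * Q αv := by
    have := key αv
    rw [hpair] at this
    linarith
  have h1 : c * B αv y' = c ^ 2 * Q αv := key y'
  have h2 : (c + 2) * (B αv y' + 2 * Q αv) = (c + 2) ^ 2 * Q αv := by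
    have hk := key (y' + αv)
    have hp : pair (y' + αv) α = c + 2 := by
      rw [map_add]; simp [hpair, hc]
    rw [hp] at hk
    have hB : B αv (y' + αv) = B αv y' + 2 * Q αv := by
      rw [hBsymm, hBadd, hBsymm, hBself]
    rw [hB] at hk
    exact hk
  have hlin : B αv y' = c * Q αv := by nlinarith [h1, h2]
  -- conclude
  have hsmul : B (ni • αv) y' = (ni : ℤ) * B αv y' := by
    have : (ni • αv : Y) = (ni : ℤ) • αv := by
      simp [natCast_zsmul]
    rw [this, hBzsmul]
  rw [hsmul, hlin]
  obtain ⟨-, k, hk⟩ := hni.1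
  exact ⟨k * c, by nlinarith [hk]⟩
end

section
/- Let Q : Y → ℤ be a quadratic form and C₁, C₂ two bisectors of Q. Then there exists a function H : Y/2Y → ℤ/2ℤ such that C₂(y₁,y₂) - C₁(y₁,y₂) = H(y₁+y₂) - H(y₁) - H(y₂) for all y₁, y₂ ∈ Y; in other words, any two bisectors of Q are isomorphic in the groupoid of bisectors. -/
/-!
`D = C₂ - C₁` is an alternating, hence (mod 2) symmetric, `ℤ`-bilinear form. For an ordered basis,
the strictly upper triangular half `E` of the Gram matrix of `D` satisfies `E + Eᵀ = D`, so
`H y = E y y` has polarization `D`; it is `2Y`-periodic because its values lie in `ℤ/2ℤ`.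
-/

def LinearMap.mk₂OfBiadditive {M N P : Type*} [AddCommGroup M] [AddCommGroup N] [AddCommGroup P]
    (f : M → N → P) (h₁ : ∀ m₁ m₂ n, f (m₁ + m₂) n = f m₁ n + f m₂ n)
    (h₂ : ∀ m n₁ n₂, f m (n₁ + n₂) = f m n₁ + f m n₂) : M →ₗ[ℤ] N →ₗ[ℤ] P :=
  LinearMap.mk₂ ℤ f h₁ (fun c m n => map_zsmul (AddMonoidHom.mk' (f · n) (h₁ · · n)) c m) h₂
    (fun c m n => map_zsmul (AddMonoidHom.mk' (f m) (h₂ m)) c n)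

namespace LinearMap

variable {R M N : Type*} [CommSemiring R] [AddCommMonoid M] [Module R M] [AddCommMonoid N]
  [Module R N]

theorem exists_add_flip_eq [Module.Free R M] (D : M →ₗ[R] M →ₗ[R] N) (hD : D.IsAlt)
    (hsymm : ∀ x y, D x y = D y x) : ∃ E : M →ₗ[R] M →ₗ[R] N, E + E.flip = D := by
  obtain ⟨ι, b⟩ := Module.Free.exists_basis (R := R) (M := M)
  let : LinearOrder ι := IsWellOrder.linearOrder WellOrderingRel
  refine ⟨b.constr R fun i => b.constr R fun j => if i < j then D (b i) (b j) else 0, ?_⟩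
  refine ext_basis b b fun i j => ?_
  rcases lt_trichotomy i j with hij | rfl | hji
  · simp [hij, hij.not_gt]
  · simp [hD.self_eq_zero]
  · simp [hji, hji.not_gt, hsymm (b i)]

end LinearMap

namespace QuadraticMap

variable {R M N : Type*} [CommRing R] [AddCommGroup M] [Module R M] [AddCommGroup N] [Module R N]

theorem exists_polarBilin_eq [Module.Free R M] (D : LinearMap.BilinMap R M N) (hD : D.IsAlt)
    (hsymm : ∀ x y, D x y = D y x) : ∃ q : QuadraticMap R M N, q.polarBilin = D := by
  obtain ⟨E, hE⟩ := D.exists_add_flip_eq hD hsymm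
  exact ⟨LinearMap.BilinMap.toQuadraticMap E, LinearMap.ext₂ fun x y => by
    simp [← hE, LinearMap.BilinMap.polar_toQuadraticMap]⟩

theorem map_add_two_nsmul_of_zmod_two [Module R (ZMod 2)] (q : QuadraticMap R M (ZMod 2))
    (x y : M) : q (x + 2 • y) = q x := by
  have h_polar : polar q x (y + y) = 0 := by rw [polar_add_right, CharTwo.add_self_eq_zero]
  have h_double : q (y + y) = 0 := by
    rw [map_add_self, nsmul_eq_mul, show ((4 : ℕ) : ZMod 2) = 0 from rfl, zero_mul]
  rwa [polar, h_double, sub_zero, sub_eq_zero, ← two_nsmul] at h_polar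

end QuadraticMap

theorem bisectors_isomorphic_general
    {Y : Type*} [AddCommGroup Y] [Module.Free ℤ Y]
    (Q : Y → ℤ)
    (C₁ C₂ : Y → Y → ZMod 2)
    (hC₁add₁ : ∀ y₁ y₂ y₃ : Y, C₁ (y₁ + y₂) y₃ = C₁ y₁ y₃ + C₁ y₂ y₃)
    (hC₁add₂ : ∀ y₁ y₂ y₃ : Y, C₁ y₁ (y₂ + y₃) = C₁ y₁ y₂ + C₁ y₁ y₃)
    (hC₂add₁ : ∀ y₁ y₂ y₃ : Y, C₂ (y₁ + y₂) y₃ = C₂ y₁ y₃ + C₂ y₂ y₃)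
    (hC₂add₂ : ∀ y₁ y₂ y₃ : Y, C₂ y₁ (y₂ + y₃) = C₂ y₁ y₂ + C₂ y₁ y₃)
    (hC₁Q : ∀ y : Y, C₁ y y = (Q y : ZMod 2))
    (hC₂Q : ∀ y : Y, C₂ y y = (Q y : ZMod 2)) :
    ∃ H : Y → ZMod 2,
      (∀ y z : Y, H (y + 2 • z) = H y) ∧
      (∀ y₁ y₂ : Y, C₂ y₁ y₂ - C₁ y₁ y₂ = H (y₁ + y₂) - H y₁ - H y₂) := by
  let D : Y →ₗ[ℤ] Y →ₗ[ℤ] ZMod 2 := LinearMap.mk₂OfBiadditive (fun y z => C₂ y z - C₁ y z)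
    (fun _ _ _ => by rw [hC₂add₁, hC₁add₁]; ring) (fun _ _ _ => by rw [hC₂add₂, hC₁add₂]; ring)
  have hD : D.IsAlt := fun y => sub_eq_zero.mpr ((hC₂Q y).trans (hC₁Q y).symm)
  have hsymm : ∀ y z, D y z = D z y := fun y z => by
    rw [← hD.neg, ZMod.neg_eq_self_mod_two]
  obtain ⟨q, hq⟩ := QuadraticMap.exists_polarBilin_eq D hD hsymm
  exact ⟨q, q.map_add_two_nsmul_of_zmod_two, fun y₁ y₂ => (LinearMap.congr_fun₂ hq y₁ y₂).symm⟩

/-- Any two bisectors `C₁, C₂` of a quadratic form `Q` are isomorphic in the groupoid of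
bisectors: there is a function `H : Y/2Y → ℤ/2ℤ` (here: a function on `Y` invariant under
translation by `2Y`) with `C₂ - C₁ = ∂H`. -/
theorem bisectors_isomorphic
    {Y : Type*} [AddCommGroup Y] [Module.Free ℤ Y] [Module.Finite ℤ Y]
    (Q : Y → ℤ)
    (hQsmul : ∀ (n : ℤ) (y : Y), Q (n • y) = n ^ 2 * Q y)
    (hBadd : ∀ y₁ y₂ y₃ : Y,
      (Q (y₁ + y₂ + y₃) - Q (y₁ + y₂) - Q y₃)
        = (Q (y₁ + y₃) - Q y₁ - Q y₃) + (Q (y₂ + y₃) - Q y₂ - Q y₃))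
    (C₁ C₂ : Y → Y → ZMod 2)
    (hC₁add₁ : ∀ y₁ y₂ y₃ : Y, C₁ (y₁ + y₂) y₃ = C₁ y₁ y₃ + C₁ y₂ y₃)
    (hC₁add₂ : ∀ y₁ y₂ y₃ : Y, C₁ y₁ (y₂ + y₃) = C₁ y₁ y₂ + C₁ y₁ y₃)
    (hC₂add₁ : ∀ y₁ y₂ y₃ : Y, C₂ (y₁ + y₂) y₃ = C₂ y₁ y₃ + C₂ y₂ y₃)
    (hC₂add₂ : ∀ y₁ y₂ y₃ : Y, C₂ y₁ (y₂ + y₃) = C₂ y₁ y₂ + C₂ y₁ y₃)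
    (hC₁Q : ∀ y : Y, C₁ y y = (Q y : ZMod 2))
    (hC₂Q : ∀ y : Y, C₂ y y = (Q y : ZMod 2)) :
    ∃ H : Y → ZMod 2,
      (∀ y z : Y, H (y + 2 • z) = H y) ∧
      (∀ y₁ y₂ : Y, C₂ y₁ y₂ - C₁ y₁ y₂ = H (y₁ + y₂) - H y₁ - H y₂) :=
  bisectors_isomorphic_general Q C₁ C₂ hC₁add₁ hC₁add₂ hC₂add₁ hC₂add₂ hC₁Q hC₂Q
end

section
/- Every Weyl-invariant quadratic form Q on the cocharacter lattice Y of a root datum possesses a fair bisector, i.e., a bisector C such that C(α^∨, y) = C(y, α^∨) = 0 for all y ∈ Y whenever α^∨ is a simple coroot with Q(α^∨) even. -/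
/-!
Reduce modulo `2`: `Q` induces a quadratic form `q` on the `𝔽₂`-vector space `Y / 2Y`. Invariance
of `Q` under the reflection `s_i` forces `B(y, α∨) = ⟨y, α⟩ Q(α∨)`, so when `Q(α∨)` is even the
class of `α∨` lies in the radical of `q`: `q` vanishes on it and it is orthogonal to everything.
Hence `q` descends to the quotient `V` of `Y / 2Y` by the span of these classes. As every quadratic
form on a vector space is the diagonal of some bilinear form, pick such a form on `V`; pulled back
to `Y` it is a bisector, and it is fair because the even simple coroots map to `0` in `V`.
-/

namespace QuadraticMap

section CommRing

variable {R M N : Type*} [CommRing R] [AddCommGroup M] [Module R M] [AddCommGroup N] [Module R N]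

theorem mem_radical_iff {Q : QuadraticMap R M N} {m : M} :
    m ∈ Q.radical ↔ Q m = 0 ∧ ∀ n, polar Q m n = 0 := by
  simp [radical, LinearMap.ext_iff]

theorem polar_eq_mul_of_map_reflection [IsDomain R] [NeZero (2 : R)]
    (Q : QuadraticMap R M R) (f : M →+ R) {a : M} (hfa : f a = 2)
    (hQ : ∀ y, Q (y - f y • a) = Q y) (y : M) : polar Q y a = f y * Q a := by
  have key : ∀ z, f z * polar Q z a = f z ^ 2 * Q a := fun z => by
    have h := QuadraticMap.map_add Q z (-(f z • a))
    rw [← sub_eq_add_neg, hQ, polar_neg_right, polar_smul_right, QuadraticMap.map_neg,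
      QuadraticMap.map_smul, smul_eq_mul, smul_eq_mul] at h
    linear_combination h
  -- the identities at `y` and at `y + a` differ by `2 * polar Q y a = 2 * f y * Q a`
  have hy := key y
  have hya := key (y + a)
  rw [map_add, hfa, polar_add_left, polar_self, two_nsmul] at hya
  exact mul_left_cancel₀ (two_ne_zero (α := R)) (by linear_combination hya - hy)

end CommRing

section Int

variable {M N : Type*} [AddCommGroup M] [AddCommGroup N] (f : M → N)
  (hsmul : ∀ (a : ℤ) (x : M), f (a • x) = (a * a) • f x)
  (hpolar : ∀ x x' y : M, polar f (x + x') y = polar f x y + polar f x' y)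

def ofIntPolar : QuadraticMap ℤ M N :=
  ofPolar f hsmul hpolar fun a x y =>
    map_zsmul (AddMonoidHom.mk' (polar f · y) (hpolar · · y)) a x

@[simp]
theorem coe_ofIntPolar : ⇑(ofIntPolar f hsmul hpolar) = f := rfl

end Int

section Field

variable {K V N : Type*} [Field K] [AddCommGroup V] [Module K V] [AddCommGroup N] [Module K N]

theorem exists_bilinMap_toQuadraticMap_eq_of_le_radical (q : QuadraticMap K V N)
    {W : Submodule K V} (hW : W ≤ q.radical) :
    ∃ G : LinearMap.BilinMap K V N,
      G.toQuadraticMap = q ∧ ∀ w ∈ W, ∀ v, G w v = 0 ∧ G v w = 0 := by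
  obtain ⟨G, hG⟩ := LinearMap.BilinMap.toQuadraticMap_surjective (q.lift W hW)
  refine ⟨G.compl₁₂ W.mkQ W.mkQ, ?_, fun w hw v => ?_⟩
  · ext v
    simpa using congr($hG (W.mkQ v))
  · simp [(Submodule.Quotient.mk_eq_zero W).2 hw]

end Field

section ZMod

variable {n : ℕ} {V N : Type*} [AddCommGroup V] [Module (ZMod n) V] [AddCommGroup N]
  [Module (ZMod n) N]

variable (n) in
def toZModQuadraticMap (Q : QuadraticMap ℤ V N) : QuadraticMap (ZMod n) V N :=
  ofPolar Q
    (fun a x => by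
      obtain ⟨k, rfl⟩ := ZMod.intCast_surjective a
      rw [← Int.cast_mul, Int.cast_smul_eq_zsmul, Int.cast_smul_eq_zsmul, Q.map_smul])
    (polar_add_left Q)
    (fun a x y => by
      obtain ⟨k, rfl⟩ := ZMod.intCast_surjective a
      rw [Int.cast_smul_eq_zsmul, Int.cast_smul_eq_zsmul, polar_smul_left])

end ZMod

section ModN

variable {M : Type*} [AddCommGroup M] (n : ℕ) (Q : QuadraticMap ℤ M ℤ)

theorem range_lsmul_le_radical_comp_intCast :
    LinearMap.range (LinearMap.lsmul ℤ M n) ≤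
      ((Int.castAddHom (ZMod n)).toIntLinearMap.compQuadraticMap Q).radical := by
  rintro _ ⟨z, rfl⟩
  refine mem_radical_iff.2 ⟨?_, fun v => ?_⟩
  · simp only [LinearMap.lsmul_apply, LinearMap.compQuadraticMap_apply, Q.map_smul]
    simp
  · simp [polar_smul_left_of_tower]

def modN : QuadraticMap (ZMod n) (ModN M n) (ZMod n) :=
  (((Int.castAddHom (ZMod n)).toIntLinearMap.compQuadraticMap Q).lift _
    (range_lsmul_le_radical_comp_intCast n Q)).toZModQuadraticMap n

@[simp]
theorem modN_mkQ (y : M) : Q.modN n (ModN.mkQ n y) = Q y := rfl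

@[simp]
theorem polar_modN_mkQ (x y : M) :
    polar (Q.modN n) (ModN.mkQ n x) (ModN.mkQ n y) = polar Q x y := by
  simp [polar, ← map_add]

end ModN

end QuadraticMap

open QuadraticMap Submodule in
theorem exists_fair_bisector_general
    {Y X I : Type*} [AddCommGroup Y] [AddCommGroup X]
    (pair : Y →+ X →+ ℤ)
    (αv : I → Y) (α : I → X)
    (hpair : ∀ i : I, pair (αv i) (α i) = 2)
    (Q : Y → ℤ) (B : Y → Y → ℤ)
    (hBdef : ∀ y₁ y₂ : Y, B y₁ y₂ = Q (y₁ + y₂) - Q y₁ - Q y₂)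
    (hQsmul : ∀ (n : ℤ) (y : Y), Q (n • y) = n ^ 2 * Q y)
    (hBadd : ∀ y₁ y₂ y₃ : Y, B (y₁ + y₂) y₃ = B y₁ y₃ + B y₂ y₃)
    (hWeyl : ∀ (i : I) (y : Y), Q (y - pair y (α i) • αv i) = Q y) :
    ∃ C : Y → Y → ZMod 2,
      (∀ y₁ y₂ y₃ : Y, C (y₁ + y₂) y₃ = C y₁ y₃ + C y₂ y₃) ∧
      (∀ y₁ y₂ y₃ : Y, C y₁ (y₂ + y₃) = C y₁ y₂ + C y₁ y₃) ∧
      (∀ y : Y, C y y = (Q y : ZMod 2)) ∧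
      (∀ i : I, (2 : ℤ) ∣ Q (αv i) →
        ∀ y : Y, C (αv i) y = 0 ∧ C y (αv i) = 0) := by
  let Qz : QuadraticMap ℤ Y ℤ := ofIntPolar Q (fun n y => by rw [hQsmul, smul_eq_mul, pow_two])
    (fun x x' y => by simp only [polar, ← hBdef, hBadd])
  have polar_coroot (i : I) (y : Y) : polar Qz y (αv i) = pair y (α i) * Q (αv i) :=
    polar_eq_mul_of_map_reflection Qz (pair.flip (α i)) (hpair i) (hWeyl i) y
  let W : Submodule (ZMod 2) (ModN Y 2) :=
    span (ZMod 2) (Set.range fun i : {i // (2 : ℤ) ∣ Q (αv i)} => ModN.mkQ 2 (αv i))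
  have hW : W ≤ (Qz.modN 2).radical := by
    refine span_le.2 <| Set.range_subset_iff.2 fun ⟨i, hi⟩ => mem_radical_iff.2 ⟨?_, fun v => ?_⟩
    · simpa [Qz, ZMod.intCast_zmod_eq_zero_iff_dvd] using hi
    · obtain ⟨y, rfl⟩ := mkQ_surjective _ v
      refine (polar_modN_mkQ 2 Qz (αv i) y).trans ?_
      rw [polar_comm, polar_coroot, Int.cast_mul, (ZMod.intCast_zmod_eq_zero_iff_dvd _ 2).2 hi,
        mul_zero]
  obtain ⟨G, hGq, hGW⟩ := exists_bilinMap_toQuadraticMap_eq_of_le_radical _ hW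
  refine ⟨fun y z => G (ModN.mkQ 2 y) (ModN.mkQ 2 z), ?_, ?_, fun y => ?_, fun i hi y => ?_⟩
  · simp
  · simp
  · exact DFunLike.congr_fun hGq (ModN.mkQ 2 y)
  · exact hGW _ (subset_span ⟨⟨i, hi⟩, rfl⟩) _

/-- Every Weyl-invariant quadratic form `Q` on the cocharacter lattice `Y` of a root
datum possesses a fair bisector: a bilinear `C : Y × Y → ℤ/2ℤ` with `C(y,y) ≡ Q(y)`
mod `2`, vanishing in both variables on each simple coroot `α∨` with `Q(α∨)` even. -/
theorem exists_fair_bisector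
    {Y X I : Type*} [AddCommGroup Y] [AddCommGroup X]
    [Module.Free ℤ Y] [Module.Finite ℤ Y] [Finite I]
    (pair : Y →+ X →+ ℤ)
    (αv : I → Y) (α : I → X)
    (hpair : ∀ i : I, pair (αv i) (α i) = 2)
    (Q : Y → ℤ) (B : Y → Y → ℤ)
    (hBdef : ∀ y₁ y₂ : Y, B y₁ y₂ = Q (y₁ + y₂) - Q y₁ - Q y₂)
    (hQsmul : ∀ (n : ℤ) (y : Y), Q (n • y) = n ^ 2 * Q y)
    (hBadd : ∀ y₁ y₂ y₃ : Y, B (y₁ + y₂) y₃ = B y₁ y₃ + B y₂ y₃)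
    (hWeyl : ∀ (i : I) (y : Y), Q (y - pair y (α i) • αv i) = Q y) :
    ∃ C : Y → Y → ZMod 2,
      (∀ y₁ y₂ y₃ : Y, C (y₁ + y₂) y₃ = C y₁ y₃ + C y₂ y₃) ∧
      (∀ y₁ y₂ y₃ : Y, C y₁ (y₂ + y₃) = C y₁ y₂ + C y₁ y₃) ∧
      (∀ y : Y, C y y = (Q y : ZMod 2)) ∧
      (∀ i : I, (2 : ℤ) ∣ Q (αv i) →
        ∀ y : Y, C (αv i) y = 0 ∧ C y (αv i) = 0) :=
  exists_fair_bisector_general pair αv α hpair Q B hBdef hQsmul hBadd hWeyl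
end

section
/- Let V be a finite-dimensional vector space over 𝔽₂ and C̄ : V × V → ℤ/2ℤ a symmetric bilinear form. Let δ : ℤ/2ℤ → ℤ/4ℤ be the unique injective group homomorphism. Then there exists a function κ : V → ℤ/4ℤ (a tetractor) satisfying κ(v₁+v₂) - κ(v₁) - κ(v₂) = δ(C̄(v₁,v₂)) for all v₁, v₂ ∈ V. -/
/-!
Lift from `ZMod 2` to `ZMod 4` in coordinates. In a basis of `V`, the Gram matrix of `C̄` lifts
entrywise to a symmetric matrix over `ZMod 4`, i.e. to a symmetric bilinear form `B` on
`ι → ZMod 4`, and the coordinate vector of `v` lifts to some `ṽ`; put `κ v = B(ṽ, ṽ)`.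
As `4 = 0` in `ZMod 4` and `B` is symmetric, `x ↦ B(x, x)` is invariant under `x ↦ x + 2z`, and the
lift of `v + w` is `ṽ + w̃` up to such a `2z`. Hence `κ(v+w) - κ v - κ w = 2 B(ṽ, w̃)`, which is
`δ` of the reduction of `B(ṽ, w̃)` mod 2, i.e. `δ(C̄(v, w))`.
-/

open LinearMap (BilinForm)

theorem LinearMap.BilinForm.toQuadraticMap_add_two_smul {R M : Type*} [CommRing R]
    [AddCommGroup M] [Module R M] (h4 : (4 : R) = 0) {B : BilinForm R M} (hB : B.IsSymm)
    (x z : M) : B.toQuadraticMap (x + (2 : R) • z) = B.toQuadraticMap x := by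
  simp only [BilinMap.toQuadraticMap_apply, map_add, map_smul, LinearMap.add_apply,
    LinearMap.smul_apply, smul_eq_mul, hB.eq z x]
  linear_combination (B x z + B z z) * h4

theorem AddMonoidHom.apply_castHom_eq_two_mul {δ : ZMod 2 →+ ZMod 4}
    (hδ : Function.Injective δ) (a : ZMod 4) :
    δ (ZMod.castHom (by norm_num : 2 ∣ 4) (ZMod 2) a) = 2 * a := by
  have hδ1 : δ 1 = 2 := by
    have h_ne : δ 1 ≠ 0 := (map_ne_zero_iff δ hδ).mpr one_ne_zero
    have h_two : δ 1 + δ 1 = 0 := by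
      rw [← map_add, show (1 + 1 : ZMod 2) = 0 from rfl, map_zero]
    revert h_ne h_two
    generalize δ 1 = u
    revert u
    decide
  obtain ⟨h_red, h_two⟩ | ⟨h_red, h_two⟩ :
      (ZMod.castHom (by norm_num : 2 ∣ 4) (ZMod 2) a = 0 ∧ 2 * a = 0) ∨
        (ZMod.castHom (by norm_num : 2 ∣ 4) (ZMod 2) a = 1 ∧ 2 * a = 2) := by
    revert a; decide
  · rw [h_red, h_two, map_zero]
  · rw [h_red, h_two, hδ1]

theorem LinearMap.BilinForm.exists_polar_eq_of_isSymm {V ι : Type*} [AddCommGroup V]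
    [Module (ZMod 2) V] [Fintype ι] [DecidableEq ι] (b : Module.Basis ι (ZMod 2) V)
    {C : BilinForm (ZMod 2) V} (hC : C.IsSymm)
    {δ : ZMod 2 →+ ZMod 4} (hδ : Function.Injective δ) :
    ∃ κ : V → ZMod 4, ∀ v w, QuadraticMap.polar κ v w = δ (C v w) := by
  let lift : V → ι → ZMod 4 := fun v i => (b.repr v i).cast
  let B : BilinForm (ZMod 4) (ι → ZMod 4) := Matrix.toBilin' ((C.toMatrix b).map ZMod.cast)
  have hB : B.IsSymm := Matrix.isSymm_toBilin'_iff_isSymm.2 <|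
    ((C.isSymm_toMatrix_iff_isSymm b).2 hC).map _
  refine ⟨fun v => B.toQuadraticMap (lift v), fun v w => ?_⟩
  have hlift : lift (v + w) = lift v + lift w + (2 : ZMod 4) • (lift v * lift w) := by
    funext i
    simp only [lift, map_add, Finsupp.add_apply, Pi.add_apply, Pi.smul_apply, Pi.mul_apply,
      smul_eq_mul]
    generalize b.repr v i = x
    generalize b.repr w i = y
    revert x y
    decide
  have hreduce : ZMod.castHom (by norm_num : 2 ∣ 4) (ZMod 2) (B (lift v) (lift w)) = C v w := by
    conv_rhs => rw [← Matrix.toBilin_toMatrix b C]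
    have hcast : ∀ x : ZMod 2, ((x.cast : ZMod 4).cast : ZMod 2) = x := by decide
    simp only [B, lift, Matrix.toBilin'_apply, Matrix.toBilin_apply, map_sum, map_mul,
      ZMod.castHom_apply, Matrix.map_apply, LinearMap.BilinForm.toMatrix_apply, hcast]
  calc QuadraticMap.polar (fun v => B.toQuadraticMap (lift v)) v w
      = QuadraticMap.polar B.toQuadraticMap (lift v) (lift w) := by
        simp only [QuadraticMap.polar, hlift, B.toQuadraticMap_add_two_smul (by decide) hB]
    _ = 2 * B (lift v) (lift w) := by
        rw [LinearMap.BilinMap.polar_toQuadraticMap, hB.eq (lift w), two_mul]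
    _ = δ (C v w) := by rw [← hreduce, AddMonoidHom.apply_castHom_eq_two_mul hδ]

/-- For a symmetric bilinear form `C̄ : V × V → ℤ/2ℤ` on a finite-dimensional
`𝔽₂`-vector space `V`, and `δ : ℤ/2ℤ → ℤ/4ℤ` the injective homomorphism, there exists a
tetractor `κ : V → ℤ/4ℤ` with `κ(v₁+v₂) - κ(v₁) - κ(v₂) = δ(C̄(v₁,v₂))`. -/
theorem exists_tetractor
    {V : Type*} [AddCommGroup V] [Module (ZMod 2) V] [FiniteDimensional (ZMod 2) V]
    (Cb : V → V → ZMod 2)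
    (hsymm : ∀ v w : V, Cb v w = Cb w v)
    (hadd₁ : ∀ v₁ v₂ w : V, Cb (v₁ + v₂) w = Cb v₁ w + Cb v₂ w)
    (hadd₂ : ∀ v w₁ w₂ : V, Cb v (w₁ + w₂) = Cb v w₁ + Cb v w₂)
    (δ : ZMod 2 →+ ZMod 4) (hδ : Function.Injective δ) :
    ∃ κ : V → ZMod 4, ∀ v₁ v₂ : V, κ (v₁ + v₂) - κ v₁ - κ v₂ = δ (Cb v₁ v₂) := by
  let C : BilinForm (ZMod 2) V := LinearMap.mk₂ (ZMod 2) Cb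
    hadd₁ (fun c v w => ZMod.map_smul (AddMonoidHom.mk' (Cb · w) (hadd₁ · · w)) c v)
    hadd₂ (fun c v w => ZMod.map_smul (AddMonoidHom.mk' (Cb v) (hadd₂ v)) c w)
  exact LinearMap.BilinForm.exists_polar_eq_of_isSymm (Module.finBasis (ZMod 2) V) (C := C)
    ⟨hsymm⟩ hδ
end

section
/- Let V be a finite elementary abelian 2-group and C̄ : V × V → ℤ/2ℤ a symmetric bilinear form. The set of tetractors of C̄ is a torsor for Hom(V, ℤ/2ℤ) under pointwise addition via the embedding δ : ℤ/2ℤ → ℤ/4ℤ: if κ is a tetractor then κ + δ∘h is a tetractor for every homomorphism h : V → ℤ/2ℤ, and any two tetractors differ by δ∘h for a unique such h. -/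
/-- `κ : V → ℤ/4ℤ` is a tetractor of the symmetric bilinear form `Cb` (with respect to
the injective homomorphism `δ : ℤ/2ℤ → ℤ/4ℤ`). -/
def IsTetractor {V : Type*} [AddCommGroup V] (δ : ZMod 2 →+ ZMod 4)
    (Cb : V → V → ZMod 2) (κ : V → ZMod 4) : Prop :=
  ∀ v₁ v₂ : V, κ (v₁ + v₂) - κ v₁ - κ v₂ = δ (Cb v₁ v₂)

/-- The set of tetractors of a symmetric bilinear form `C̄` on a finite elementary
abelian 2-group `V` is a torsor for `Hom(V, ℤ/2ℤ)`: adding `δ ∘ h` to a tetractor gives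
a tetractor, and any two tetractors differ by `δ ∘ h` for a unique homomorphism `h`. -/
theorem tetractors_torsor
    {V : Type*} [AddCommGroup V] [Fintype V] (htwo : ∀ v : V, v + v = 0)
    (Cb : V → V → ZMod 2)
    (hsymm : ∀ v w : V, Cb v w = Cb w v)
    (hadd₁ : ∀ v₁ v₂ w : V, Cb (v₁ + v₂) w = Cb v₁ w + Cb v₂ w)
    (hadd₂ : ∀ v w₁ w₂ : V, Cb v (w₁ + w₂) = Cb v w₁ + Cb v w₂)
    (δ : ZMod 2 →+ ZMod 4) (hδ : Function.Injective δ) :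
    (∀ κ : V → ZMod 4, IsTetractor δ Cb κ →
      ∀ h : V →+ ZMod 2, IsTetractor δ Cb (fun v => κ v + δ (h v))) ∧
    (∀ κ₁ κ₂ : V → ZMod 4, IsTetractor δ Cb κ₁ → IsTetractor δ Cb κ₂ →
      ∃! h : V →+ ZMod 2, ∀ v : V, κ₂ v = κ₁ v + δ (h v)) := by
  -- δ 1 = 2
  have hδ1 : δ 1 = 2 := by
    have h0 : δ 1 + δ 1 = 0 := by
      rw [← δ.map_add]
      have h11 : (1 : ZMod 2) + 1 = 0 := by decide
      rw [h11, δ.map_zero]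
    have hne : δ 1 ≠ 0 := by
      intro h
      exact one_ne_zero (hδ (h.trans δ.map_zero.symm))
    have key : ∀ x : ZMod 4, x + x = 0 → x ≠ 0 → x = 2 := by decide
    exact key _ h0 hne
  have hsurj : ∀ y : ZMod 4, y + y = 0 → ∃ x : ZMod 2, δ x = y := by
    intro y hy
    have key : ∀ y : ZMod 4, y + y = 0 → y = 0 ∨ y = 2 := by decide
    have := key y hy
    rcases this with rfl | rfl
    · exact ⟨0, δ.map_zero⟩
    · exact ⟨1, hδ1⟩
  constructor
  · intro κ hκ h v₁ v₂
    have := hκ v₁ v₂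
    simp only [h.map_add, δ.map_add]
    linear_combination this
  · intro κ₁ κ₂ hκ₁ hκ₂
    set g : V → ZMod 4 := fun v => κ₂ v - κ₁ v with hg
    have gadd : ∀ v₁ v₂, g (v₁ + v₂) = g v₁ + g v₂ := by
      intro v₁ v₂
      have h1 := hκ₁ v₁ v₂
      have h2 := hκ₂ v₁ v₂
      simp only [hg]
      linear_combination h2 - h1
    have g0 : g 0 = 0 := by
      have := gadd 0 0
      rw [add_zero] at this
      exact (left_eq_add.mp this)
    have gtwo : ∀ v, g v + g v = 0 := by
      intro v
      rw [← gadd, htwo, g0]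
    choose f hf using fun v => hsurj (g v) (gtwo v)
    have fadd : ∀ v₁ v₂, f (v₁ + v₂) = f v₁ + f v₂ := by
      intro v₁ v₂
      apply hδ
      rw [δ.map_add, hf, hf, hf, gadd]
    have f0 : f 0 = 0 := by
      apply hδ
      rw [hf, g0, δ.map_zero]
    refine ⟨⟨⟨f, f0⟩, fadd⟩, ?_, ?_⟩
    · intro v
      have := hf v
      simp only [hg] at this
      simp only [AddMonoidHom.coe_mk, ZeroHom.coe_mk]
      linear_combination -this
    · intro h' hh'
      ext v
      apply hδ
      have := hh' v
      simp only [AddMonoidHom.coe_mk, ZeroHom.coe_mk]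
      rw [hf]
      simp only [hg]
      linear_combination -this
end

section
/- Let (I,·) be a Cartan datum of finite type, i.e., a finite set I with a positive definite symmetric ℤ-valued bilinear form on ℤ[I] such that i·i is a positive even integer and 2(i·j)/(i·i) is a nonpositive integer for i ≠ j. Let m be a positive integer with m/(2(i·i)) ∈ ℤ for all i, and define i ∨ j = m·(i·j)/((i·i)(j·j)). Then (I,∨) is again a Cartan datum: i ∨ j ∈ ℤ, i ∨ i is a positive even integer, 2(i∨j)/(i∨i) = 2(i·j)/(j·j) ∈ ℤ_{≤0} for i ≠ j, and ∨ is positive definite. -/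
/-- The dual Cartan datum: if `(I,·)` is a Cartan datum of finite type (given by the
symmetric matrix `c i j = i·j`) and `m` is a positive integer with `2(i·i) ∣ m` for all
`i`, then `i ∨ j := m·(i·j)/((i·i)(j·j))` again defines a Cartan datum of finite type,
with `2(i∨j)/(i∨i) = 2(i·j)/(j·j)` a nonpositive integer for `i ≠ j`. -/
theorem dual_cartan_datum
    {I : Type*} [Fintype I]
    (c : I → I → ℤ)
    (hsymm : ∀ i j : I, c i j = c j i)
    (hpos : ∀ i : I, 0 < c i i)
    (heven : ∀ i : I, 2 ∣ c i i)
    (hoff : ∀ i j : I, i ≠ j → (c i i ∣ 2 * c i j) ∧ 2 * c i j ≤ 0)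
    (hposdef : ∀ x : I → ℚ, x ≠ 0 → 0 < ∑ i, ∑ j, x i * x j * (c i j : ℚ))
    (m : ℤ) (hm : 0 < m) (hmdvd : ∀ i : I, 2 * c i i ∣ m)
    (v : I → I → ℚ)
    (hv : ∀ i j : I, v i j = (m : ℚ) * (c i j : ℚ) / ((c i i : ℚ) * (c j j : ℚ))) :
    (∀ i j : I, v i j = v j i) ∧
    (∀ i j : I, ∃ k : ℤ, v i j = (k : ℚ)) ∧
    (∀ i : I, 0 < v i i ∧ ∃ k : ℤ, v i i = 2 * (k : ℚ)) ∧
    (∀ i j : I, i ≠ j →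
      2 * v i j / v i i = 2 * (c i j : ℚ) / (c j j : ℚ) ∧
      (∃ k : ℤ, k ≤ 0 ∧ 2 * v i j / v i i = (k : ℚ))) ∧
    (∀ x : I → ℚ, x ≠ 0 → 0 < ∑ i, ∑ j, x i * x j * v i j) := by
  have hcpos : ∀ i : I, (0 : ℚ) < (c i i : ℚ) := fun i => by exact_mod_cast hpos i
  have hc0 : ∀ i : I, (c i i : ℚ) ≠ 0 := fun i => (hcpos i).ne'
  have hmQ : (0 : ℚ) < (m : ℚ) := by exact_mod_cast hm
  have hm0 : (m : ℚ) ≠ 0 := hmQ.ne'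
  refine ⟨?_, ?_, ?_, ?_, ?_⟩
  · intro i j
    rw [hv, hv, hsymm i j, mul_comm ((c i i : ℚ)) ((c j j : ℚ))]
  · intro i j
    by_cases hij : i = j
    · subst hij
      obtain ⟨t, ht⟩ := hmdvd i
      refine ⟨2 * t, ?_⟩
      rw [hv, ht]
      push_cast
      field_simp [hc0 i]
    · obtain ⟨s, hs⟩ := (hoff i j hij).1
      obtain ⟨t, ht⟩ := hmdvd j
      refine ⟨t * s, ?_⟩
      have key : (m : ℤ) * c i j = c i i * c j j * (t * s) := by
        linear_combination (c i j) * ht + (c j j * t) * hs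
      have keyQ : (m : ℚ) * (c i j : ℚ) = (c i i : ℚ) * (c j j : ℚ) * ((t : ℚ) * (s : ℚ)) := by
        exact_mod_cast key
      rw [hv, div_eq_iff (mul_ne_zero (hc0 i) (hc0 j))]
      push_cast
      linear_combination keyQ
  · intro i
    obtain ⟨t, ht⟩ := hmdvd i
    have hvii : v i i = 2 * (t : ℚ) := by
      rw [hv, ht]
      push_cast
      field_simp [hc0 i]
    have ht0 : 0 < t := by nlinarith [hpos i, hm]
    have ht0Q : (0 : ℚ) < (t : ℚ) := by exact_mod_cast ht0
    exact ⟨by rw [hvii]; linarith, t, hvii⟩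
  · intro i j hij
    have h1 : 2 * v i j / v i i = 2 * (c i j : ℚ) / (c j j : ℚ) := by
      rw [hv, hv]
      field_simp [hc0 i, hc0 j, hm0]
    refine ⟨h1, ?_⟩
    obtain ⟨s, hs⟩ := (hoff j i hij.symm).1
    have hle := (hoff j i hij.symm).2
    have hs0 : s ≤ 0 := by nlinarith [hpos j]
    have hsQ : 2 * (c i j : ℚ) = (c j j : ℚ) * (s : ℚ) := by
      rw [hsymm i j]; exact_mod_cast hs
    refine ⟨s, hs0, ?_⟩
    rw [h1, div_eq_iff (hc0 j)]
    linear_combination hsQ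
  · intro x hx
    have hy0 : (fun i => x i / (c i i : ℚ)) ≠ 0 := by
      intro h
      apply hx
      funext i
      have h1 : x i / (c i i : ℚ) = 0 := congrFun h i
      rcases div_eq_zero_iff.mp h1 with h2 | h2
      · exact h2
      · exact absurd h2 (hc0 i)
    have hp := hposdef _ hy0
    have key : ∑ i, ∑ j, x i * x j * v i j
        = (m : ℚ) * ∑ i, ∑ j, (x i / (c i i : ℚ)) * (x j / (c j j : ℚ)) * (c i j : ℚ) := by
      rw [Finset.mul_sum]
      refine Finset.sum_congr rfl fun i _ => ?_
      rw [Finset.mul_sum]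
      refine Finset.sum_congr rfl fun j _ => ?_
      rw [hv]
      field_simp [hc0 i, hc0 j]
    rw [key]
    exact mul_pos hmQ hp
end
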